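/- arXiv:1410.2520 — 2 statements merged into one kernel-verified Lean document; each statement's English description precedes it below -/
import Mathlib

section
/- For ordinals γ, m, δ with γ, m, δ nonzero, m finite, and δ < ω^γ, the ordinal ω^γ·m + 1 + δ + 1 with its order topology is homeomorphic to ω^γ·m + 1 with its order topology. -/
open Set Ordinal
open scoped Cardinal

noncomputable section

universe u

/-- Natural (Hessenberg) addition of ordinals, as `Ordinal.nadd` in the older Mathlib
(removed from Mathlib since). -/
def Ordinal.nadd (a b : Ordinal.{u}) : Ordinal.{u} :=
  max (blsub.{u, u} a fun a' _ => nadd a' b) (blsub.{u, u} b fun b' _ => nadd a b')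
termination_by (a, b)
decreasing_by
  · exact Prod.Lex.left _ _ ‹_›
  · exact Prod.Lex.right _ ‹_›

infixl:65 " ♯ " => Ordinal.nadd

/-- Derived set (non-isolated points) of a set of ordinals, as a subspace. -/
def deriv' (s : Set Ordinal.{0}) : Set Ordinal.{0} := {x ∈ s | x ∈ closure (s \ {x})}

/-- Iterated Cantor–Bendixson derivative. -/
def iterDeriv (s : Set Ordinal.{0}) (o : Ordinal.{0}) : Set Ordinal.{0} :=
  Ordinal.limitRecOn o s (fun _ ih => deriv' ih) (fun o _ ih => ⋂ (p : Ordinal.{0}) (h : p < o), ih p h)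

/-- `s` contains a homeomorphic copy of the ordinal `α` (with its order topology). -/
def HomeoCopy (α : Ordinal.{0}) (s : Set Ordinal.{0}) : Prop :=
  ∃ t : Set Ordinal, t ⊆ s ∧ Nonempty ((Iio α : Set Ordinal.{0}) ≃ₜ t)

/-- Two ordinals are biembeddable: each is homeomorphic to a subspace of the other. -/
def Biembed (α β : Ordinal.{0}) : Prop := HomeoCopy α (Iio β) ∧ HomeoCopy β (Iio α)

/-- Two sets of ordinals are order-homeomorphic: there is an order-preserving homeomorphism. -/
def OrderHomeo (X Y : Set Ordinal.{0}) : Prop :=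
  ∃ e : X ≃ₜ Y, ∀ a b : X, a ≤ b ↔ e a ≤ e b

/-- An ordinal is order-reinforcing. -/
def OrderReinforcing (α : Ordinal.{0}) : Prop :=
  ∀ X : Set Ordinal, Nonempty ((Iio α : Set Ordinal.{0}) ≃ₜ X) → ∃ Y ⊆ X, OrderHomeo (Iio α) Y

/-- The Cantor–Bendixson rank of an ordinal: the least exponent in its Cantor normal form. -/
def CB (x : Ordinal.{0}) : Ordinal := if x = 0 then 0 else sSup {γ | (ω : Ordinal.{0}) ^ γ ∣ x}

/-- The natural (Hessenberg) sum of a finite family of ordinals. -/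
def natSumFam {k : ℕ} (α : Fin k → Ordinal.{0}) : Ordinal := (List.ofFn α).foldr (· ♯ ·) 0

/-- The Milner–Rado sum of a finite family of ordinals. -/
def mrSumFam {k : ℕ} (α : Fin k → Ordinal.{0}) : Ordinal :=
  sInf {δ | ∀ β : Fin k → Ordinal, (∀ i, β i < α i) → δ ≠ natSumFam β}

/-- The topological pigeonhole relation `β → (top α i)¹` for finitely many colours. -/
def TopPH {k : ℕ} (β : Ordinal.{0}) (α : Fin k → Ordinal.{0}) : Prop :=
  ∀ c : Ordinal → Fin k, ∃ i, HomeoCopy (α i) (Iio β ∩ c ⁻¹' {i})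

/-- The topological pigeonhole relation with an arbitrary index type of colours. -/
def TopPHFam {ι : Type*} (β : Ordinal.{0}) (α : ι → Ordinal.{0}) : Prop :=
  ∀ c : Ordinal → ι, ∃ i, HomeoCopy (α i) (Iio β ∩ c ⁻¹' {i})

/-- `ω̄[γ, m]`: `ω ^ γ * m + 1` if `γ > 0`, and `m` if `γ = 0`. -/
def obar (γ : Ordinal.{0}) (m : ℕ) : Ordinal := if γ = 0 then (m : Ordinal.{0}) else ω ^ γ * m + 1

/-- `C` is closed and unbounded in `o`. -/
def IsClubIn (C : Set Ordinal.{0}) (o : Ordinal.{0}) : Prop :=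
  C ⊆ Iio o ∧ (∀ x < o, ∃ y ∈ C, x ≤ y) ∧
    ∀ x < o, x ≠ 0 → (∀ y < x, ∃ z ∈ C, y < z ∧ z < x) → x ∈ C

/-- `S` is stationary in `o`: it meets every club subset of `o`. -/
def StationaryIn (S : Set Ordinal.{0}) (o : Ordinal.{0}) : Prop :=
  ∀ C, IsClubIn C o → (S ∩ C).Nonempty

/-!
For a successor ordinal `α = s + 1`, the initial segment `Iio α` is clopen in `Iio (α + β)`,
and its complement `[α, α + β)` is order-isomorphic, hence homeomorphic, to `β`; so `α + β` is
the disjoint union of `α` and `β`, and `α + β ≅ β + α` when `β` is a successor too.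
Taking `α = ω^γ·m + 1` and `β = δ + 1 < ω^γ`, the summand `β` is absorbed: `β + α = α`.
-/

namespace Homeomorph.Set

variable {X : Type*} [TopologicalSpace X] {s t : Set X}

def union (hs : IsOpen s) (ht : IsOpen t) (hst : Disjoint s t) : ↥(s ∪ t) ≃ₜ s ⊕ t :=
  Homeomorph.symm <| IsHomeomorph.homeomorph
    (Sum.elim (inclusion subset_union_left) (inclusion subset_union_right))
    { continuous := (continuous_inclusion _).sumElim (continuous_inclusion _)
      isOpenMap := (hs.isOpenMap_inclusion _).sumElim (ht.isOpenMap_inclusion _)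
      bijective := by
        refine ⟨(inclusion_injective _).sumElim (inclusion_injective _) ?_, ?_⟩
        · exact fun x y hxy ↦ hst.ne_of_mem x.2 y.2 (congrArg Subtype.val hxy)
        · exact fun ⟨x, hx⟩ ↦ hx.elim (fun h ↦ ⟨.inl ⟨x, h⟩, rfl⟩) (fun h ↦ ⟨.inr ⟨x, h⟩, rfl⟩) }

end Homeomorph.Set

namespace Ordinal

def iioOrderIsoIcoAdd (a b : Ordinal.{u}) : Iio b ≃o Ico a (a + b) where
  toFun x := ⟨a + x, le_self_add, add_lt_add_right x.2 a⟩
  invFun y := ⟨y - a, (sub_lt_of_le y.2.1).2 y.2.2⟩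
  left_inv x := Subtype.ext (add_sub_cancel a x)
  right_inv y := Subtype.ext (Ordinal.add_sub_cancel_of_le y.2.1)
  map_rel_iff' := add_le_add_iff_left a

def iioAddHomeomorph (s b : Ordinal.{u}) : Iio (s + 1 + b) ≃ₜ Iio (s + 1) ⊕ Iio b :=
  have hIco : Ico (s + 1) (s + 1 + b) = Ioo s (s + 1 + b) := by
    rw [← Order.succ_eq_add_one, Order.Ico_succ_left]
  (Homeomorph.setCongr (Iio_union_Ico_eq_Iio le_self_add).symm).trans <|
    (Homeomorph.Set.union isOpen_Iio (hIco ▸ isOpen_Ioo)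
      ((Iio_disjoint_Ici le_rfl).mono_right Ico_subset_Ici_self)).trans <|
    (Homeomorph.refl _).sumCongr (iioOrderIsoIcoAdd (s + 1) b).toHomeomorph.symm

def iioAddCommHomeomorph (s t : Ordinal.{u}) :
    Iio (s + 1 + (t + 1)) ≃ₜ Iio (t + 1 + (s + 1)) :=
  (iioAddHomeomorph s (t + 1)).trans <|
    (Homeomorph.sumComm _ _).trans (iioAddHomeomorph t (s + 1)).symm

theorem add_omega0_opow_mul {a b m : Ordinal.{u}} (ha : a < ω ^ b) (hm : m ≠ 0) :
    a + ω ^ b * m = ω ^ b * m :=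
  add_of_omega0_opow_le ha (le_mul_left _ (pos_iff_ne_zero.2 hm))

end Ordinal

theorem homeo_omega_pow_mul_succ_add_general (γ m δ : Ordinal.{0}) (hγ : γ ≠ 0) (hm : m ≠ 0)
    (hδlt : δ < ω ^ γ) :
    Nonempty ((Iio (ω ^ γ * m + 1 + δ + 1) : Set Ordinal.{0}) ≃ₜ
      (Iio (ω ^ γ * m + 1) : Set Ordinal.{0})) := by
  have hδ1 : δ + 1 < ω ^ γ := (isSuccLimit_opow_left isSuccLimit_omega0 hγ).add_one_lt hδlt
  have habsorb : δ + 1 + (ω ^ γ * m + 1) = ω ^ γ * m + 1 := by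
    rw [← add_assoc, add_omega0_opow_mul hδ1 hm]
  rw [add_assoc (ω ^ γ * m + 1)]
  exact ⟨(iioAddCommHomeomorph _ δ).trans (Homeomorph.setCongr (congrArg Iio habsorb))⟩

/-- `ω^γ·m + 1 + δ + 1` is homeomorphic to `ω^γ·m + 1` (order topologies). -/
theorem homeo_omega_pow_mul_succ_add (γ m δ : Ordinal.{0}) (hγ : γ ≠ 0) (hm : m ≠ 0)
    (hmfin : m < ω) (hδ : δ ≠ 0) (hδlt : δ < ω ^ γ) :
    Nonempty ((Iio (ω ^ γ * m + 1 + δ + 1) : Set Ordinal.{0}) ≃ₜ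
      (Iio (ω ^ γ * m + 1) : Set Ordinal.{0})) :=
  homeo_omega_pow_mul_succ_add_general γ m δ hγ hm hδlt
end
end

section
/- Let α and η be ordinals, Y a set of ordinals of order type α, and X = { x < η : CB(x) ∈ Y }, where CB(x) is the Cantor–Bendixson rank of x. Then the α-th Cantor–Bendixson derivative of X (as a subspace of η) is empty. -/
open Set Ordinal
open scoped Cardinal

noncomputable section

/-- Natural (Hessenberg) addition of ordinals, as in the former Mathlib `Ordinal.nadd`
(`max (blsub a (· ♯ b)) (blsub b (a ♯ ·))`), which is no longer in Mathlib. -/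
def nadd : Ordinal.{0} → Ordinal.{0} → Ordinal.{0}
  | a, b => max (⨆ a' : Iio a, Order.succ (nadd a'.1 b)) (⨆ b' : Iio b, Order.succ (nadd a b'.1))
termination_by a b => (a, b)
decreasing_by
  · exact Prod.Lex.left _ _ a'.2
  · exact Prod.Lex.right _ b'.2

infixl:65 " ♯ " => nadd

/-! A nonzero ordinal `x` is `ω ^ CB x * (p + 1)` for some `p`, so it is isolated among the
multiples of `ω ^ CB x`, hence among the points whose rank is at least `CB x`. Transporting ranks
along `Y ≃o Iio α`, induction on `ζ` shows that a point surviving `ζ` derivatives has rank of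
position at least `ζ` in `Y`; so no point survives `α` derivatives. -/

section IterDeriv

lemma iterDeriv_zero (s : Set Ordinal.{0}) : iterDeriv s 0 = s := by
  rw [iterDeriv, limitRecOn_zero]

lemma iterDeriv_add_one (s : Set Ordinal.{0}) (ζ : Ordinal.{0}) :
    iterDeriv s (ζ + 1) = deriv' (iterDeriv s ζ) := by
  rw [iterDeriv, limitRecOn_add_one]; rfl

lemma iterDeriv_of_isSuccLimit (s : Set Ordinal.{0}) {ζ : Ordinal.{0}}
    (hζ : Order.IsSuccLimit ζ) :
    iterDeriv s ζ = ⋂ p < ζ, iterDeriv s p := by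
  rw [iterDeriv, limitRecOn_limit _ _ _ _ hζ]; rfl

lemma iterDeriv_subset (s : Set Ordinal.{0}) (ζ : Ordinal.{0}) : iterDeriv s ζ ⊆ s := by
  induction ζ using Ordinal.limitRecOn with
  | zero => rw [iterDeriv_zero]
  | add_one ζ ih => rw [iterDeriv_add_one]; exact (sep_subset _ _).trans ih
  | limit ζ hζ ih =>
    rw [iterDeriv_of_isSuccLimit s hζ]
    exact fun x hx => ih ⊥ hζ.bot_lt (mem_iInter₂.1 hx ⊥ hζ.bot_lt)

variable {s : Set Ordinal.{0}} {r : Ordinal.{0} → Ordinal.{0}}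

lemma le_of_mem_iterDeriv (hr : ∀ x ∈ s, x ∉ closure ({y ∈ s | r x ≤ r y} \ {x}))
    {ζ x : Ordinal.{0}} (hx : x ∈ iterDeriv s ζ) : ζ ≤ r x := by
  induction ζ using Ordinal.limitRecOn generalizing x with
  | zero => exact zero_le
  | add_one ζ ih =>
    rw [iterDeriv_add_one] at hx
    obtain ⟨hxζ, hx_acc⟩ := hx
    refine Order.add_one_le_of_lt <|
      (ih hxζ).lt_of_ne fun hζx => hr x (iterDeriv_subset s ζ hxζ) ?_
    refine closure_mono (sdiff_subset_sdiff_left fun y hy => ?_) hx_acc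
    exact ⟨iterDeriv_subset s ζ hy, hζx ▸ ih hy⟩
  | limit ζ hζ ih =>
    rw [iterDeriv_of_isSuccLimit s hζ, mem_iInter₂] at hx
    refine le_of_forall_lt fun p hp => ?_
    have hp1 := hζ.add_one_lt hp
    exact (Order.lt_add_one_iff.2 le_rfl).trans_le (ih (p + 1) hp1 (hx _ hp1))

lemma iterDeriv_eq_empty_of_rank_lt
    (hr : ∀ x ∈ s, x ∉ closure ({y ∈ s | r x ≤ r y} \ {x}))
    {α : Ordinal.{0}} (hα : ∀ x ∈ s, r x < α) : iterDeriv s α = ∅ :=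
  eq_empty_of_forall_notMem fun x hx =>
    (hα x (iterDeriv_subset s α hx)).not_ge (le_of_mem_iterDeriv hr hx)

end IterDeriv

section CB

lemma bddAbove_opow_dvd {x : Ordinal.{0}} (hx : x ≠ 0) :
    BddAbove {γ : Ordinal.{0} | ω ^ γ ∣ x} :=
  ⟨x, fun γ hγ => (right_le_opow γ one_lt_omega0).trans (le_of_dvd hx hγ)⟩

lemma le_CB_of_opow_dvd {x γ : Ordinal.{0}} (hx : x ≠ 0) (h : ω ^ γ ∣ x) : γ ≤ CB x := by
  rw [CB, if_neg hx]
  exact le_csSup (bddAbove_opow_dvd hx) h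

lemma opow_CB_dvd (x : Ordinal.{0}) : ω ^ CB x ∣ x := by
  rcases eq_or_ne x 0 with rfl | hx
  · exact dvd_zero _
  rw [dvd_iff_mod_eq_zero]
  by_contra hrem
  set r := x % ω ^ CB x
  -- `ω ^ succ (log ω r)` divides `x` and `ω ^ CB x`, hence `r`, yet exceeds it.
  have hlog : log ω r < CB x :=
    (lt_opow_iff_log_lt one_lt_omega0 hrem).1 (mod_lt x (opow_ne_zero _ omega0_ne_zero))
  have hlog_lt_sup : log ω r < sSup {γ : Ordinal.{0} | ω ^ γ ∣ x} := by
    rwa [CB, if_neg hx] at hlog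
  obtain ⟨δ, hδ, hlogδ⟩ := exists_lt_of_lt_csSup ⟨0, by simp⟩ hlog_lt_sup
  have hdvd : ω ^ Order.succ (log ω r) ∣ r := by
    rw [dvd_iff_mod_eq_zero, mod_mod_of_dvd x (opow_dvd_opow ω (Order.succ_le_of_lt hlog)),
      ← dvd_iff_mod_eq_zero]
    exact (opow_dvd_opow ω (Order.succ_le_of_lt hlogδ)).trans hδ
  exact (lt_opow_succ_log_self one_lt_omega0 r).not_ge (le_of_dvd hrem hdvd)

lemma opow_dvd_of_le_CB {x γ : Ordinal.{0}} (h : γ ≤ CB x) : ω ^ γ ∣ x :=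
  (opow_dvd_opow ω h).trans (opow_CB_dvd x)

lemma notMem_closure_opow_CB_dvd_diff_self (x : Ordinal.{0}) :
    x ∉ closure ({y | ω ^ CB x ∣ y} \ {x}) := by
  rcases eq_or_ne x 0 with rfl | hx
  · exact fun h => closure_minimal (fun y hy => hy.2)
      (SuccOrder.isOpen_singleton_iff.2 Order.not_isSuccLimit_bot).isClosed_compl h rfl
  obtain ⟨q, hxq⟩ := opow_CB_dvd x
  have hq_not_limit : ¬ Order.IsSuccLimit q := fun hlim => by
    obtain ⟨c, rfl⟩ := isSuccPrelimit_iff_omega0_dvd.1 hlim.isSuccPrelimit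
    have hdvd : ω ^ (CB x + 1) ∣ x := ⟨c, by rw [opow_add, opow_one, mul_assoc]; exact hxq⟩
    exact (Order.lt_add_one_iff.2 le_rfl).not_ge (le_CB_of_opow_dvd hx hdvd)
  obtain ⟨p, rfl⟩ : ∃ p, q = p + 1 := by
    rcases zero_or_succ_or_isSuccLimit q with rfl | ⟨p, rfl⟩ | hlim
    · exact absurd (hxq.trans (mul_zero _)) hx
    · exact ⟨p, Order.succ_eq_add_one p⟩
    · exact absurd hlim hq_not_limit
  set a := ω ^ CB x
  have ha : 0 < a := opow_pos _ omega0_pos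
  have hpx : a * p < x := by
    rw [hxq, mul_add_one]; exact lt_add_of_pos_right _ ha
  have hsub : {y | a ∣ y} \ {x} ⊆ Iic (a * p) ∪ Ioi x := by
    rintro _ ⟨⟨q', rfl⟩, hne⟩
    by_contra! h
    rw [mem_union, mem_Iic, mem_Ioi, not_or, not_le, not_lt, hxq] at h
    have hpq : p < q' := (mul_lt_mul_iff_right₀ ha).1 h.1
    have hqp : q' ≤ p + 1 := (mul_le_mul_iff_right₀ ha).1 h.2
    exact hne (by rw [le_antisymm hqp (Order.add_one_le_of_lt hpq), hxq, mem_singleton_iff])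
  have hclosed : IsClosed (Iic (a * p) ∪ Ioi x) :=
    isClosed_Iic.union (Order.Ici_succ x ▸ isClosed_Ici)
  exact fun h => (closure_minimal hsub hclosed h).elim hpx.not_ge (lt_irrefl x)

end CB

/-- If `Y` has order type `α` and `X = {x < η | CB x ∈ Y}`, then the `α`-th
Cantor–Bendixson derivative of `X` is empty. -/
theorem iterDeriv_rank_colouring (α η : Ordinal.{0}) (Y : Set Ordinal.{0})
    (hY : Nonempty ((Iio α : Set Ordinal.{0}) ≃o Y)) :
    iterDeriv {x : Ordinal.{0} | x < η ∧ CB x ∈ Y} α = ∅ := by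
  classical
  obtain ⟨e⟩ := hY
  let r : Ordinal.{0} → Ordinal.{0} := fun x => if h : CB x ∈ Y then e.symm ⟨CB x, h⟩ else 0
  have hr {x : Ordinal.{0}} (hx : CB x ∈ Y) : r x = e.symm ⟨CB x, hx⟩ := dif_pos hx
  refine iterDeriv_eq_empty_of_rank_lt (r := r) ?_ fun x ⟨_, hx⟩ => hr hx ▸ (e.symm _).2
  rintro x ⟨_, hx⟩ hx_acc
  refine notMem_closure_opow_CB_dvd_diff_self x (closure_mono (sdiff_subset_sdiff_left ?_) hx_acc)
  rintro y ⟨⟨_, hy⟩, hxy⟩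
  rw [hr hx, hr hy, Subtype.coe_le_coe, e.symm.le_iff_le] at hxy
  exact opow_dvd_of_le_CB hxy

end
end
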